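/- Let k ≥ 2 and 0 < J < 2, and let s : ZMod k → {−1,+1} be any choice of signs. Then the point (1/2, …, 1/2) is the unique x ∈ ℝ^k with W(x) = 0, where W is the cyclic-interaction vector field. -/

import Mathlib

/-!
A zero `x` of `W` satisfies `x i - 1/2 = tanh (s i * J * (x (i + 1) - 1/2)) / 2`, and
`|tanh t| ≤ |t|`, so `|x i - 1/2| ≤ (J/2) |x (i + 1) - 1/2|`. At a coordinate where
`|x i - 1/2|` is maximal this forces the maximum, hence every deviation, to vanish.
-/

noncomputable def cycW (k : ℕ) (J : ℝ) (s : ZMod k → ℝ) (x : ZMod k → ℝ) :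
    ZMod k → ℝ :=
  fun i =>
    Real.exp (s i * J * (x (i + 1) - 1 / 2)) -
      x i * (Real.exp (s i * J * (x (i + 1) - 1 / 2)) +
        Real.exp (-(s i * J * (x (i + 1) - 1 / 2))))

namespace Real

lemma sinh_le_mul_cosh {t : ℝ} (ht : 0 ≤ t) : sinh t ≤ t * cosh t := by
  set g : ℝ → ℝ := fun u => u * cosh u - sinh u
  have hg : ∀ u, HasDerivAt g (u * sinh u) u := fun u =>
    (((hasDerivAt_id' u).mul (hasDerivAt_cosh u)).sub (hasDerivAt_sinh u)).congr_deriv (by ring)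
  have hmono : MonotoneOn g (Set.Ici 0) := by
    refine monotoneOn_of_deriv_nonneg (convex_Ici 0)
      (fun u _ => (hg u).continuousAt.continuousWithinAt)
      (fun u _ => (hg u).differentiableAt.differentiableWithinAt) fun u hu => ?_
    rw [interior_Ici, Set.mem_Ioi] at hu
    rw [(hg u).deriv]
    exact mul_nonneg hu.le (sinh_pos_iff.2 hu).le
  have := hmono Set.self_mem_Ici (Set.mem_Ici.2 ht) ht
  simp only [g, zero_mul, sinh_zero, sub_zero] at this
  linarith

lemma abs_tanh_le_abs (t : ℝ) : |tanh t| ≤ |t| := by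
  rw [tanh_eq_sinh_div_cosh, abs_div, abs_sinh, abs_of_pos (cosh_pos t), ← cosh_abs,
    div_le_iff₀ (cosh_pos _)]
  exact sinh_le_mul_cosh (abs_nonneg t)

end Real

lemma eq_zero_of_abs_le_mul_abs_comp {ι : Type*} [Finite ι] {f : ι → ℝ} (σ : ι → ι) {q : ℝ}
    (hq : q < 1) (h : ∀ i, |f i| ≤ q * |f (σ i)|) : f = 0 := by
  funext i
  have : Nonempty ι := ⟨i⟩
  obtain ⟨m, hm⟩ := Finite.exists_max fun j => |f j|
  have hfm : |f m| ≤ 0 := by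
    rcases le_total q 0 with hq0 | hq0
    · exact (h m).trans (mul_nonpos_of_nonpos_of_nonneg hq0 (abs_nonneg _))
    · nlinarith [h m, mul_le_mul_of_nonneg_left (hm (σ m)) hq0]
  exact abs_nonpos_iff.1 ((hm i).trans hfm)

lemma cycW_apply_eq_zero_iff {k : ℕ} {J : ℝ} {s x : ZMod k → ℝ} {i : ZMod k} :
    cycW k J s x i = 0 ↔
      x i - 1 / 2 = Real.tanh (s i * J * (x (i + 1) - 1 / 2)) / 2 := by
  unfold cycW
  set t := s i * J * (x (i + 1) - 1 / 2)
  have hexp : Real.exp t = Real.cosh t + Real.sinh t := (Real.cosh_add_sinh t).symm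
  have hexp_neg : Real.exp (-t) = Real.cosh t - Real.sinh t := (Real.cosh_sub_sinh t).symm
  have hcosh := Real.cosh_pos t
  rw [hexp, hexp_neg, Real.tanh_eq_sinh_div_cosh]
  constructor <;> intro h
  · field_simp
    linear_combination -h
  · field_simp at h
    linear_combination -h

lemma abs_sub_half_le_of_cycW_eq_zero {k : ℕ} {J : ℝ} {s x : ZMod k → ℝ}
    (hx : cycW k J s x = 0) {i : ZMod k} (hs : |s i| ≤ 1) :
    |x i - 1 / 2| ≤ |J| / 2 * |x (i + 1) - 1 / 2| := by
  rw [cycW_apply_eq_zero_iff.1 (congrFun hx i), abs_div, abs_two]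
  have : |Real.tanh (s i * J * (x (i + 1) - 1 / 2))| ≤ |J| * |x (i + 1) - 1 / 2| := calc
    _ ≤ |s i| * |J| * |x (i + 1) - 1 / 2| := by
        simpa only [abs_mul] using Real.abs_tanh_le_abs (s i * J * (x (i + 1) - 1 / 2))
    _ ≤ |J| * |x (i + 1) - 1 / 2| := by
        rw [mul_assoc]
        exact mul_le_of_le_one_left (by positivity) hs
  linarith

/-- For `k ≥ 2` and `0 < J < 2`, whatever the signs, `(1/2,…,1/2)` is the unique
zero of the cyclic-interaction vector field. -/
theorem statement18 (k : ℕ) (hk : 2 ≤ k) (J : ℝ) (hJ0 : 0 < J) (hJ2 : J < 2)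
    (s : ZMod k → ℝ) (hs : ∀ i, s i = 1 ∨ s i = -1) :
    {x : ZMod k → ℝ | cycW k J s x = 0} = {fun _ => 1 / 2} := by
  have : NeZero k := ⟨by omega⟩
  have hs_abs : ∀ i, |s i| ≤ 1 := fun i => by rcases hs i with h | h <;> simp [h]
  refine Set.eq_singleton_iff_unique_mem.2 ⟨funext fun i => ?_, fun x hx => ?_⟩
  · exact cycW_apply_eq_zero_iff.2 (by simp)
  · have hdev : (fun i => x i - 1 / 2) = 0 :=
      eq_zero_of_abs_le_mul_abs_comp (· + 1) (q := J / 2) (by linarith) fun i => by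
        simpa only [abs_of_pos hJ0] using abs_sub_half_le_of_cycW_eq_zero hx (hs_abs i)
    exact funext fun i => sub_eq_zero.1 (congrFun hdev i)
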